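/- Let (H, ·, ∘) be a cocommutative Hopf brace with ⇀ defined by a⇀x := S(a₍₁₎)·(a₍₂₎∘x). Define a↼x := T(a₍₁₎⇀x₍₁₎)∘a₍₂₎∘x₍₂₎, where T is the antipode of (H, ∘). Then ↼ is a right action of the Hopf algebra (H, ∘) on H: (a↼x)↼y = a↼(x∘y) and a↼1 = a; moreover ↼ is a coalgebra map: Δ(a↼x) = (a₍₁₎↼x₍₁₎)⊗(a₍₂₎↼x₍₂₎). -/

import Mathlib

open scoped TensorProduct
open Coalgebra

variable (R H : Type*) [CommRing R] [AddCommGroup H] [Module R H] [Coalgebra R H]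

/-- A Hopf algebra structure (multiplication, unit, antipode) on the coalgebra `H`:
the multiplication is associative with unit, comultiplication and counit are algebra
maps, and `S` is an antipode (expressed via arbitrary Sweedler representations). -/
structure HopfMul where
  mul : H →ₗ[R] H →ₗ[R] H
  one : H
  S : H →ₗ[R] H
  mul_assoc : ∀ a b c : H, mul (mul a b) c = mul a (mul b c)
  one_mul : ∀ a : H, mul one a = a
  mul_one : ∀ a : H, mul a one = a
  comul_mul : ∀ (a b : H) {ι κ : Type*} (ra : Coalgebra.Repr R a ι) (rb : Coalgebra.Repr R b κ),
    comul (R := R) (mul a b) = ∑ i ∈ ra.index, ∑ j ∈ rb.index,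
      mul (ra.left i) (rb.left j) ⊗ₜ[R] mul (ra.right i) (rb.right j)
  comul_one : comul (R := R) one = one ⊗ₜ[R] one
  counit_mul : ∀ a b : H, counit (R := R) (mul a b) = counit (R := R) a * counit (R := R) b
  counit_one : counit (R := R) one = 1
  S_mul_left : ∀ (a : H) {ι : Type*} (r : Coalgebra.Repr R a ι),
    ∑ i ∈ r.index, mul (S (r.left i)) (r.right i) = counit (R := R) a • one
  S_mul_right : ∀ (a : H) {ι : Type*} (r : Coalgebra.Repr R a ι),
    ∑ i ∈ r.index, mul (r.left i) (S (r.right i)) = counit (R := R) a • one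

universe d₁ d₂ d₃ d₄ c₁ c₂ c₃ c₄

/-- A Hopf brace: two Hopf algebra structures `dot` (written `·`) and `circ` (written `∘`)
on the same coalgebra `H`, satisfying `g∘(h·ℓ) = (g₍₁₎∘h)·S(g₍₂₎)·(g₍₃₎∘ℓ)`. -/
structure HopfBrace where
  dot : HopfMul.{_, _, d₁, d₂, d₃, d₄} R H
  circ : HopfMul.{_, _, c₁, c₂, c₃, c₄} R H
  compat : ∀ (g h ℓ : H) {ι : Type*} (r : Coalgebra.Repr R g ι)
      {κ : r.ι → Type*} (r2 : ∀ i : r.ι, Coalgebra.Repr R (r.right i) (κ i)),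
    circ.mul g (dot.mul h ℓ) = ∑ i ∈ r.index, ∑ j ∈ (r2 i).index,
      dot.mul (dot.mul (circ.mul (r.left i) h) (dot.S ((r2 i).left j)))
        (circ.mul ((r2 i).right j) ℓ)

/-- Cocommutativity of the coalgebra `H`. -/
def Cocomm : Prop :=
  ∀ a : H, TensorProduct.comm R H H (comul (R := R) a) = comul (R := R) a

/-!
Write `f ⋆ g = μ ∘ (f ⊗ g) ∘ Δ` for the convolution of linear maps out of a coalgebra. Over a
cocommutative coalgebra, `⋆` of two coalgebra maps is again a coalgebra map (`Δ` itself is one)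
and the antipodes are coalgebra maps, so `⇀` and `↼`, being convolutions of coalgebra maps
`H ⊗ H → H`, are coalgebra maps.

The brace axiom says that `g ↦ g∘(h·ℓ)` is the `·`-convolution of `g ↦ g∘h` and `g ↦ g ⇀ ℓ`.
Cancelling convolution inverses it gives `(g∘h) ⇀ z = g ⇀ (h ⇀ z)`, the factorisation
`a∘x = (a₁ ⇀ x₁)∘(a₂ ↼ x₂)`, and the matched-pair identity `(a₁ ⇀ x₁)∘((a₂ ↼ x₂) ⇀ y) = a ⇀ (x∘y)`.
As for matched pairs of groups, applying the anti-multiplicative `T` to the last identity and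
comparing with the definition of `↼` yields `(a ↼ x) ↼ y = a ↼ (x∘y)`.
-/

-- `Coalgebra` is open, so a plain `open TensorProduct` would also open `Coalgebra.TensorProduct`.
open _root_.TensorProduct

universe w in
lemma Finset.sum_uLift_equivFin {ι M : Type*} [AddCommMonoid M] (s : Finset ι) (g : ι → M) :
    ∑ i : ULift.{w} (Fin s.card), g (s.equivFin.symm i.down) = ∑ i ∈ s, g i := by
  rw [← Finset.sum_coe_sort s, ← Equiv.sum_comp s.equivFin.symm,
    ← Equiv.sum_comp Equiv.ulift.{w, 0}]
  rfl

universe w in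
/-- Re-indexing by a lifted `Fin n`, so that a representation can be fed to the axioms of
`HopfMul` and `HopfBrace`, which quantify over index types in fixed universes. -/
noncomputable def Coalgebra.Repr.uLift {R C : Type*} [CommSemiring R] [AddCommMonoid C]
    [Module R C] [CoalgebraStruct R C] {c : C} {ι : Type*} (r : Repr R c ι) :
    Repr R c (ULift.{w} (Fin r.index.card)) where
  index := Finset.univ
  left i := r.left (r.index.equivFin.symm i.down)
  right i := r.right (r.index.equivFin.symm i.down)
  eq := (r.index.sum_uLift_equivFin fun i => r.left i ⊗ₜ r.right i).trans r.eq

lemma Coalgebra.Repr.sum_uLift {R C M : Type*} [CommSemiring R] [AddCommMonoid C]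
    [Module R C] [CoalgebraStruct R C] [AddCommMonoid M] {c : C} {ι : Type*} (r : Repr R c ι)
    (F : C → C → M) :
    ∑ i ∈ r.uLift.index, F (r.uLift.left i) (r.uLift.right i) =
      ∑ i ∈ r.index, F (r.left i) (r.right i) :=
  r.index.sum_uLift_equivFin fun i => F (r.left i) (r.right i)

section Convolution

variable {R}
variable {A B C D : Type*} [AddCommMonoid A] [Module R A] [AddCommMonoid B] [Module R B]
  [AddCommMonoid C] [Module R C] [Coalgebra R C] [AddCommMonoid D] [Module R D] [Coalgebra R D]

lemma Coalgebra.sum_counit_right_smul {c : C} {ι : Type*} (r : Repr R c ι) :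
    ∑ i ∈ r.index, counit (R := R) (r.right i) • r.left i = c := by
  have h := congr(_root_.TensorProduct.rid R C $(sum_tmul_counit_eq r))
  simp only [map_sum, rid_tmul, one_smul] at h
  exact h

lemma TensorProduct.comul_tmul_repr {c : C} {d : D} {ι κ : Type*} (rc : Repr R c ι)
    (rd : Repr R d κ) :
    comul (R := R) (c ⊗ₜ[R] d) = ∑ i ∈ rc.index, ∑ j ∈ rd.index,
      (rc.left i ⊗ₜ[R] rd.left j) ⊗ₜ[R] (rc.right i ⊗ₜ[R] rd.right j) := by
  simp only [comul_tmul, ← rc.eq, ← rd.eq, tmul_sum, sum_tmul, map_sum,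
    AlgebraTensorModule.tensorTensorTensorComm_tmul]
  exact Finset.sum_comm

noncomputable def conv (μ : A →ₗ[R] A →ₗ[R] A) (f g : C →ₗ[R] A) : C →ₗ[R] A :=
  lift μ ∘ₗ map f g ∘ₗ comul

noncomputable def convUnit (e : A) : C →ₗ[R] A := (counit : C →ₗ[R] R).smulRight e

@[simp] lemma convUnit_apply (e : A) (c : C) :
    (convUnit e : C →ₗ[R] A) c = counit (R := R) c • e := rfl

variable (μ : A →ₗ[R] A →ₗ[R] A)

lemma conv_apply_repr (f g : C →ₗ[R] A) {c : C} {ι : Type*} (r : Repr R c ι) :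
    conv μ f g c = ∑ i ∈ r.index, μ (f (r.left i)) (g (r.right i)) := by
  simp [conv, ← r.eq]

lemma conv_apply_tmul_repr (f g : C ⊗[R] D →ₗ[R] A) {c : C} {d : D} {ι κ : Type*}
    (rc : Repr R c ι) (rd : Repr R d κ) :
    conv μ f g (c ⊗ₜ[R] d) = ∑ i ∈ rc.index, ∑ j ∈ rd.index,
      μ (f (rc.left i ⊗ₜ[R] rd.left j)) (g (rc.right i ⊗ₜ[R] rd.right j)) := by
  simp [conv, comul_tmul_repr rc rd]

lemma conv_assoc (hμ : ∀ a b c, μ (μ a b) c = μ a (μ b c)) (f g h : C →ₗ[R] A) :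
    conv μ (conv μ f g) h = conv μ f (conv μ g h) := by
  have hμ' : lift μ ∘ₗ (lift μ).rTensor A =
      lift μ ∘ₗ (lift μ).lTensor A ∘ₗ (TensorProduct.assoc R A A A).toLinearMap := by
    ext; simp [hμ]
  calc conv μ (conv μ f g) h
      = (lift μ ∘ₗ (lift μ).rTensor A) ∘ₗ map (map f g) h ∘ₗ comul.rTensor C ∘ₗ comul := by
        simp only [conv, coassoc_simps]
    _ = conv μ f (conv μ g h) := by
        rw [hμ']; simp only [conv, coassoc_simps]

lemma convUnit_conv {e : A} (he : ∀ a, μ e a = a) (f : C →ₗ[R] A) :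
    conv μ (convUnit e) f = f := by
  ext c
  rw [conv_apply_repr μ _ _ (ℛ R c)]
  simp only [convUnit_apply, map_smul, LinearMap.smul_apply, he]
  simp_rw [← map_smul f]
  rw [← map_sum, sum_counit_smul]

lemma conv_convUnit {e : A} (he : ∀ a, μ a e = a) (f : C →ₗ[R] A) :
    conv μ f (convUnit e) = f := by
  ext c
  rw [conv_apply_repr μ _ _ (ℛ R c)]
  simp only [convUnit_apply, map_smul, he]
  simp_rw [← map_smul f]
  rw [← map_sum, sum_counit_right_smul]

lemma conv_comp_coalgHom (f g : C →ₗ[R] A) (ψ : D →ₗc[R] C) :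
    conv μ f g ∘ₗ (ψ : D →ₗ[R] C) = conv μ (f ∘ₗ (ψ : D →ₗ[R] C)) (g ∘ₗ (ψ : D →ₗ[R] C)) := by
  simp only [conv, LinearMap.comp_assoc, map_comp, CoalgHomClass.map_comp_comul]

lemma convUnit_comp_coalgHom (e : A) (ψ : D →ₗc[R] C) :
    convUnit e ∘ₗ (ψ : D →ₗ[R] C) = convUnit e := by
  ext d
  simp [CoalgHomClass.counit_comp_apply]

lemma comp_conv (ν : B →ₗ[R] B →ₗ[R] B) (φ : A →ₗ[R] B)
    (hφ : ∀ a b, φ (μ a b) = ν (φ a) (φ b)) (f g : C →ₗ[R] A) :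
    φ ∘ₗ conv μ f g = conv ν (φ ∘ₗ f) (φ ∘ₗ g) := by
  ext c
  simp [conv_apply_repr _ _ _ (ℛ R c), hφ]

lemma comp_convUnit (φ : A →ₗ[R] B) (e : A) :
    φ ∘ₗ (convUnit e : C →ₗ[R] A) = convUnit (φ e) := by
  ext c
  simp [map_smul]

lemma conv_flip [IsCocomm R C] (f g : C →ₗ[R] A) : conv μ.flip g f = conv μ f g := by
  have h : lift μ.flip ∘ₗ map g f ∘ₗ (TensorProduct.comm R C C).toLinearMap =
      lift μ ∘ₗ map f g := by
    ext; simp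
  calc conv μ.flip g f
      = (lift μ.flip ∘ₗ map g f ∘ₗ (TensorProduct.comm R C C).toLinearMap) ∘ₗ comul := by
        rw [conv, LinearMap.comp_assoc, LinearMap.comp_assoc, comm_comp_comul]
    _ = conv μ f g := by rw [h, LinearMap.comp_assoc]; rfl

lemma conv_map_map (ν : B →ₗ[R] B →ₗ[R] B) (f f' : C →ₗ[R] A) (g g' : D →ₗ[R] B) :
    conv (map₂ μ ν) (map f g) (map f' g') = map (conv μ f f') (conv ν g g') := by
  ext c d
  simp only [AlgebraTensorModule.curry_apply, LinearMap.restrictScalars_self, curry_apply,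
    conv_apply_tmul_repr _ _ _ (ℛ R c) (ℛ R d), map_tmul, map₂_apply_tmul,
    conv_apply_repr _ _ _ (ℛ R c), conv_apply_repr _ _ _ (ℛ R d), tmul_sum, sum_tmul]
  exact Finset.sum_comm

variable {μ}

lemma eq_of_conv_eq_convUnit (hμ : ∀ a b c, μ (μ a b) c = μ a (μ b c)) {e : A}
    (he₁ : ∀ a, μ e a = a) (he₂ : ∀ a, μ a e = a) {f p g : C →ₗ[R] A}
    (hf : conv μ f p = convUnit e) (hg : conv μ p g = convUnit e) : f = g := by
  rw [← conv_convUnit μ he₂ f, ← hg, ← conv_assoc μ hμ, hf, convUnit_conv μ he₁]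

lemma conv_left_cancel (hμ : ∀ a b c, μ (μ a b) c = μ a (μ b c)) {e : A}
    (he : ∀ a, μ e a = a) {q p f g : C →ₗ[R] A} (hq : conv μ q p = convUnit e)
    (h : conv μ p f = conv μ p g) : f = g := by
  rw [← convUnit_conv μ he f, ← convUnit_conv μ he g, ← hq, conv_assoc μ hμ, conv_assoc μ hμ, h]

lemma map_convUnit_comp_comul (e : A) (e' : B) :
    map (convUnit e : C →ₗ[R] A) (convUnit e') ∘ₗ comul = convUnit (e ⊗ₜ[R] e') := by
  ext c
  have hc := congr(counit (R := R) $(sum_counit_smul (ℛ R c)))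
  simp only [map_sum, map_smul, smul_eq_mul] at hc
  simp only [LinearMap.comp_apply, ← (ℛ R c).eq, map_sum, map_tmul, convUnit_apply,
    smul_tmul_smul]
  rw [← Finset.sum_smul, ← hc]

variable {ν : B →ₗ[R] B →ₗ[R] B}

lemma map₂_assoc (hμ : ∀ a b c, μ (μ a b) c = μ a (μ b c))
    (hν : ∀ a b c, ν (ν a b) c = ν a (ν b c)) (x y z : A ⊗[R] B) :
    map₂ μ ν (map₂ μ ν x y) z = map₂ μ ν x (map₂ μ ν y z) := by
  induction x using TensorProduct.induction_on with
  | zero => simp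
  | add x x' hx hx' => simp only [map_add, LinearMap.add_apply, hx, hx']
  | tmul a b =>
    induction y using TensorProduct.induction_on with
    | zero => simp
    | add y y' hy hy' => simp only [map_add, LinearMap.add_apply, hy, hy']
    | tmul a' b' =>
      induction z using TensorProduct.induction_on with
      | zero => simp
      | add z z' hz hz' => simp only [map_add, hz, hz']
      | tmul a'' b'' => simp [hμ, hν]

lemma map₂_tmul_left {e : A} {e' : B} (he : ∀ a, μ e a = a) (he' : ∀ b, ν e' b = b)
    (x : A ⊗[R] B) : map₂ μ ν (e ⊗ₜ e') x = x := by
  induction x using TensorProduct.induction_on with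
  | zero => simp
  | add x x' hx hx' => simp only [map_add, hx, hx']
  | tmul a b => simp [he, he']

lemma map₂_tmul_right {e : A} {e' : B} (he : ∀ a, μ a e = a) (he' : ∀ b, ν b e' = b)
    (x : A ⊗[R] B) : map₂ μ ν x (e ⊗ₜ e') = x := by
  induction x using TensorProduct.induction_on with
  | zero => simp
  | add x x' hx hx' => simp only [map_add, LinearMap.add_apply, hx, hx']
  | tmul a b => simp [he, he']

end Convolution

namespace HopfMul

variable {R H}
variable (P : HopfMul R H)

lemma sum_S_mul {a : H} {ι : Type*} (r : Repr R a ι) :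
    ∑ i ∈ r.index, P.mul (P.S (r.left i)) (r.right i) = counit (R := R) a • P.one := by
  rw [← P.S_mul_left a r.uLift, r.sum_uLift fun x y => P.mul (P.S x) y]

lemma sum_mul_S {a : H} {ι : Type*} (r : Repr R a ι) :
    ∑ i ∈ r.index, P.mul (r.left i) (P.S (r.right i)) = counit (R := R) a • P.one := by
  rw [← P.S_mul_right a r.uLift, r.sum_uLift fun x y => P.mul x (P.S y)]

lemma comul_mul_repr (a b : H) {ι κ : Type*} (ra : Repr R a ι) (rb : Repr R b κ) :
    comul (R := R) (P.mul a b) = ∑ i ∈ ra.index, ∑ j ∈ rb.index,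
      P.mul (ra.left i) (rb.left j) ⊗ₜ[R] P.mul (ra.right i) (rb.right j) := by
  rw [P.comul_mul a b ra.uLift rb.uLift,
    ← ra.sum_uLift fun x y => ∑ j ∈ rb.index, P.mul x (rb.left j) ⊗ₜ[R] P.mul y (rb.right j)]
  refine Finset.sum_congr rfl fun i _ => ?_
  exact rb.sum_uLift fun x y => P.mul _ x ⊗ₜ[R] P.mul _ y

noncomputable def oneRepr : Repr R P.one Unit where
  index := {()}
  left _ := P.one
  right _ := P.one
  eq := by rw [Finset.sum_singleton, P.comul_one]

noncomputable def mulRepr {a b : H} {ι κ : Type*} (ra : Repr R a ι) (rb : Repr R b κ) :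
    Repr R (P.mul a b) (ι × κ) where
  index := ra.index ×ˢ rb.index
  left i := P.mul (ra.left i.1) (rb.left i.2)
  right i := P.mul (ra.right i.1) (rb.right i.2)
  eq := by rw [Finset.sum_product, P.comul_mul_repr a b ra rb]

lemma S_conv_id : conv P.mul P.S LinearMap.id = convUnit P.one := by
  ext a
  simp [conv_apply_repr _ _ _ (ℛ R a), P.sum_S_mul]

lemma id_conv_S : conv P.mul LinearMap.id P.S = convUnit P.one := by
  ext a
  simp [conv_apply_repr _ _ _ (ℛ R a), P.sum_mul_S]

noncomputable def mulCoalgHom : H ⊗[R] H →ₗc[R] H where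
  toLinearMap := lift P.mul
  counit_comp := by
    ext a b
    simpa [mul_comm] using P.counit_mul a b
  map_comp_comul := by
    ext a b
    simpa [comul_tmul_repr (ℛ R a) (ℛ R b)] using (P.comul_mul_repr a b (ℛ R a) (ℛ R b)).symm

@[simp] lemma coe_mulCoalgHom : (P.mulCoalgHom : H ⊗[R] H →ₗ[R] H) = lift P.mul := rfl

lemma comul_mul_map₂ (a b : H) :
    comul (R := R) (P.mul a b) = map₂ P.mul P.mul (comul a) (comul b) := by
  simp only [P.comul_mul_repr a b (ℛ R a) (ℛ R b), ← (ℛ R a).eq, map_sum, map₂_apply_tmul,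
    ← (ℛ R b).eq, LinearMap.coe_sum, Finset.sum_apply, map_tmul]
  exact Finset.sum_comm

lemma counit_S (a : H) : counit (R := R) (P.S a) = counit a := by
  have h := congr(counit (R := R) $(P.sum_S_mul (ℛ R a)))
  simp only [map_sum, P.counit_mul, map_smul, P.counit_one, smul_eq_mul] at h
  rw [_root_.mul_one] at h
  rw [← h]
  conv_lhs => rw [← sum_counit_right_smul (ℛ R a)]
  simp [mul_comm]

lemma comul_S [IsCocomm R H] (a : H) :
    comul (R := R) (P.S a) = map P.S P.S (comul a) := by
  -- `(S ⊗ S) ∘ Δ` is a left and `Δ ∘ S` a right convolution inverse of `Δ`.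
  have hδ : (comulCoalgHom R H : H →ₗ[R] H ⊗[R] H) = comul := rfl
  have hG : conv (map₂ P.mul P.mul) (map P.S P.S ∘ₗ comul) comul =
      convUnit (P.one ⊗ₜ[R] P.one) := by
    rw [← map_convUnit_comp_comul, ← P.S_conv_id, ← conv_map_map, ← hδ, conv_comp_coalgHom,
      map_id, LinearMap.id_comp]
  have hF : conv (map₂ P.mul P.mul) comul (comul ∘ₗ P.S) = convUnit (P.one ⊗ₜ[R] P.one) := by
    rw [← P.comul_one, ← comp_convUnit, ← P.id_conv_S, comp_conv _ _ _ P.comul_mul_map₂,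
      LinearMap.comp_id]
  exact (LinearMap.congr_fun (eq_of_conv_eq_convUnit (map₂_assoc P.mul_assoc P.mul_assoc)
    (map₂_tmul_left P.one_mul P.one_mul) (map₂_tmul_right P.mul_one P.mul_one) hG hF) a).symm

noncomputable def SCoalgHom [IsCocomm R H] : H →ₗc[R] H where
  toLinearMap := P.S
  counit_comp := LinearMap.ext P.counit_S
  map_comp_comul := LinearMap.ext fun a => (P.comul_S a).symm

lemma S_mul (a b : H) : P.S (P.mul a b) = P.mul (P.S b) (P.S a) := by
  -- Both sides are convolution inverses of the multiplication `H ⊗ H → H`.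
  have hF : conv P.mul (P.S ∘ₗ lift P.mul) (lift P.mul) = convUnit P.one := by
    have h := conv_comp_coalgHom P.mul P.S LinearMap.id P.mulCoalgHom
    rwa [P.S_conv_id, convUnit_comp_coalgHom, LinearMap.id_comp, eq_comm] at h
  have hG : conv P.mul (lift P.mul) (lift P.mul.flip ∘ₗ map P.S P.S) = convUnit P.one := by
    refine TensorProduct.ext' fun x y => ?_
    rw [conv_apply_tmul_repr _ _ _ (ℛ R x) (ℛ R y)]
    simp only [LinearMap.comp_apply, map_tmul, lift.tmul, LinearMap.flip_apply, P.mul_assoc]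
    calc _ = ∑ i ∈ (ℛ R x).index, P.mul ((ℛ R x).left i) (P.mul
          (∑ j ∈ (ℛ R y).index, P.mul ((ℛ R y).left j) (P.S ((ℛ R y).right j)))
          (P.S ((ℛ R x).right i))) := by simp [map_sum, P.mul_assoc]
      _ = convUnit P.one (x ⊗ₜ[R] y) := by
        simp [P.sum_mul_S, P.one_mul, ← Finset.smul_sum, smul_smul, mul_comm]
  have := eq_of_conv_eq_convUnit P.mul_assoc P.one_mul P.mul_one hF hG
  simpa using LinearMap.congr_fun this (a ⊗ₜ b)

variable {C : Type*} [AddCommMonoid C] [Module R C] [Coalgebra R C] [IsCocomm R C]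

lemma conv_S_comp_S_comp (p q : C →ₗ[R] H) :
    conv P.mul (P.S ∘ₗ p) (P.S ∘ₗ q) = P.S ∘ₗ conv P.mul q p := by
  rw [comp_conv P.mul P.mul.flip P.S P.S_mul, conv_flip]

noncomputable def convCoalgHom (f g : C →ₗc[R] H) : C →ₗc[R] H :=
  P.mulCoalgHom.comp ((Coalgebra.TensorProduct.map f g).comp (comulCoalgHom R C))

end HopfMul

noncomputable def counitRight : H ⊗[R] H →ₗc[R] H :=
  (Coalgebra.TensorProduct.rid R R H).toCoalgHom.comp (CoalgHom.lTensor H (counitCoalgHom R H))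

lemma counitRight_tmul (g h : H) : counitRight R H (g ⊗ₜ h) = counit (R := R) h • g := rfl

namespace HopfBrace

variable {R H}
variable (Br : HopfBrace R H)

noncomputable def mulRight (z : H) : H →ₗ[R] H := Br.circ.mul.flip z

@[simp] lemma mulRight_apply (z g : H) : Br.mulRight z g = Br.circ.mul g z := rfl

lemma mulRight_comp_conv {C : Type*} [AddCommMonoid C] [Module R C] [Coalgebra R C]
    (z : H) (p q : C →ₗ[R] H) :
    Br.mulRight z ∘ₗ conv Br.circ.mul p q = conv Br.circ.mul p (Br.mulRight z ∘ₗ q) := by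
  ext c
  simp [conv_apply_repr _ _ _ (ℛ R c), Br.circ.mul_assoc]

/-- `g ↦ g ⇀ z`. -/
noncomputable def actAt (z : H) : H →ₗ[R] H := conv Br.dot.mul Br.dot.S (Br.mulRight z)

/-- The brace axiom `g∘(h·ℓ) = (g₁∘h)·(g₂ ⇀ ℓ)`. -/
lemma mulRight_dot_mul (h ℓ : H) :
    Br.mulRight (Br.dot.mul h ℓ) = conv Br.dot.mul (Br.mulRight h) (Br.actAt ℓ) := by
  ext g
  let r := (ℛ R g).uLift
  let r₂ := fun i => (ℛ R (r.right i)).uLift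
  rw [mulRight_apply, Br.compat g h ℓ r r₂, conv_apply_repr _ _ _ r]
  refine Finset.sum_congr rfl fun i _ => ?_
  rw [actAt, conv_apply_repr _ _ _ (r₂ i), map_sum]
  simp [Br.dot.mul_assoc]

lemma id_conv_actAt (z : H) : conv Br.dot.mul LinearMap.id (Br.actAt z) = Br.mulRight z := by
  rw [actAt, ← conv_assoc _ Br.dot.mul_assoc, Br.dot.id_conv_S, convUnit_conv _ Br.dot.one_mul]

lemma circ_mul_eq_sum (h z : H) {ι : Type*} (r : Repr R h ι) :
    Br.circ.mul h z = ∑ i ∈ r.index, Br.dot.mul (r.left i) (Br.actAt z (r.right i)) := by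
  rw [← mulRight_apply, ← id_conv_actAt, conv_apply_repr _ _ _ r]
  rfl

lemma actAt_dot_mul (u v : H) :
    Br.actAt (Br.dot.mul u v) = conv Br.dot.mul (Br.actAt u) (Br.actAt v) := by
  rw [actAt, mulRight_dot_mul, actAt, ← conv_assoc _ Br.dot.mul_assoc]
  rfl

lemma actAt_one : Br.actAt Br.circ.one = convUnit Br.dot.one := by
  have : Br.mulRight Br.circ.one = LinearMap.id := LinearMap.ext Br.circ.mul_one
  rw [actAt, this, Br.dot.S_conv_id]

lemma dot_one_eq_circ_one : Br.dot.one = Br.circ.one := by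
  have hS := LinearMap.congr_fun (Br.mulRight_dot_mul Br.dot.one Br.dot.one) Br.circ.one
  simp only [Br.dot.mul_one, mulRight_apply, Br.circ.one_mul, actAt,
    conv_apply_repr _ _ _ Br.circ.oneRepr, HopfMul.oneRepr, Finset.sum_const, Finset.card_singleton,
    one_smul, Br.dot.one_mul] at hS
  simpa [HopfMul.oneRepr, ← hS, Br.circ.counit_one, Br.dot.one_mul] using
    (Br.dot.sum_S_mul Br.circ.oneRepr).symm

/-- `g ⊗ z ↦ g ⇀ z`. -/
noncomputable def act : H ⊗[R] H →ₗ[R] H :=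
  conv Br.dot.mul (Br.dot.S ∘ₗ counitRight R H) (lift Br.circ.mul)

/-- `a ⊗ x ↦ a ↼ x`. -/
noncomputable def ract : H ⊗[R] H →ₗ[R] H :=
  conv Br.circ.mul (Br.circ.S ∘ₗ Br.act) (lift Br.circ.mul)

lemma act_tmul (g z : H) : Br.act (g ⊗ₜ z) = Br.actAt z g := by
  rw [act, conv_apply_tmul_repr _ _ _ (ℛ R g) (ℛ R z), actAt, conv_apply_repr _ _ _ (ℛ R g)]
  refine Finset.sum_congr rfl fun i _ => ?_
  conv_rhs => rw [← sum_counit_smul (ℛ R z)]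
  simp [counitRight_tmul]

lemma act_tmul_repr (g z : H) {ι : Type*} (r : Repr R g ι) :
    Br.act (g ⊗ₜ z) =
      ∑ i ∈ r.index, Br.dot.mul (Br.dot.S (r.left i)) (Br.circ.mul (r.right i) z) := by
  rw [act_tmul, actAt, conv_apply_repr _ _ _ r]
  rfl

lemma ract_tmul_repr (a x : H) {ι κ : Type*} (ra : Repr R a ι) (rx : Repr R x κ) :
    Br.ract (a ⊗ₜ x) = ∑ i ∈ ra.index, ∑ j ∈ rx.index, Br.circ.mul
      (Br.circ.mul (Br.circ.S (Br.act (ra.left i ⊗ₜ rx.left j))) (ra.right i)) (rx.right j) := by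
  rw [ract, conv_apply_tmul_repr _ _ _ ra rx]
  simp [Br.circ.mul_assoc]

lemma ract_tmul_eq_sum (h y : H) {ι : Type*} (r : Repr R y ι) :
    Br.ract (h ⊗ₜ y) = ∑ j ∈ r.index,
      conv Br.circ.mul (Br.circ.S ∘ₗ Br.actAt (r.left j)) (Br.mulRight (r.right j)) h := by
  rw [ract, conv_apply_tmul_repr _ _ _ (ℛ R h) r, Finset.sum_comm]
  refine Finset.sum_congr rfl fun j _ => ?_
  simp [conv_apply_repr _ _ _ (ℛ R h), act_tmul]

lemma ract_tmul_circ_mul (a x y : H) :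
    Br.ract (a ⊗ₜ Br.circ.mul x y) = ∑ j ∈ (ℛ R y).index,
      conv Br.circ.mul (Br.circ.S ∘ₗ Br.act ∘ₗ (Br.mulRight ((ℛ R y).left j)).lTensor H)
        (Br.mulRight ((ℛ R y).right j) ∘ₗ lift Br.circ.mul) (a ⊗ₜ x) := by
  simp only [ract, conv_apply_tmul_repr _ _ _ (ℛ R a) (Br.circ.mulRepr (ℛ R x) (ℛ R y)),
    HopfMul.mulRepr, Finset.sum_product, conv_apply_tmul_repr _ _ _ (ℛ R a) (ℛ R x)]
  conv_rhs => rw [Finset.sum_comm]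
  refine Finset.sum_congr rfl fun i _ => ?_
  rw [Finset.sum_comm]
  simp [Br.circ.mul_assoc]

lemma ract_tmul_one (a : H) : Br.ract (a ⊗ₜ Br.circ.one) = a := by
  have hT : Br.circ.S Br.circ.one = Br.circ.one := by
    simpa [HopfMul.oneRepr, Br.circ.counit_one, Br.circ.mul_one] using
      Br.circ.sum_S_mul Br.circ.oneRepr
  have hR : Br.mulRight Br.circ.one = LinearMap.id := LinearMap.ext Br.circ.mul_one
  rw [ract_tmul_eq_sum _ _ _ Br.circ.oneRepr]
  simp [HopfMul.oneRepr, actAt_one, hR, comp_convUnit, dot_one_eq_circ_one, hT,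
    convUnit_conv _ Br.circ.one_mul]

/-- `(g∘h) ⇀ z = g ⇀ (h ⇀ z)`. -/
lemma actAt_comp_mul (z : H) :
    Br.actAt z ∘ₗ lift Br.circ.mul = Br.act ∘ₗ (Br.actAt z).lTensor H := by
  have hinv : conv Br.dot.mul (Br.dot.S ∘ₗ lift Br.circ.mul) (lift Br.circ.mul) =
      convUnit Br.dot.one := by
    have h := conv_comp_coalgHom Br.dot.mul Br.dot.S LinearMap.id Br.circ.mulCoalgHom
    rwa [Br.dot.S_conv_id, convUnit_comp_coalgHom, LinearMap.id_comp, eq_comm] at h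
  refine conv_left_cancel Br.dot.mul_assoc Br.dot.one_mul hinv ?_
  have hl := conv_comp_coalgHom Br.dot.mul LinearMap.id (Br.actAt z) Br.circ.mulCoalgHom
  rw [id_conv_actAt, LinearMap.id_comp, HopfMul.coe_mulCoalgHom] at hl
  rw [← hl, eq_comm]
  refine TensorProduct.ext' fun g h => ?_
  rw [conv_apply_tmul_repr _ _ _ (ℛ R g) (ℛ R h), Finset.sum_comm]
  calc _ = ∑ j ∈ (ℛ R h).index, conv Br.dot.mul (Br.mulRight ((ℛ R h).left j))
        (Br.actAt (Br.actAt z ((ℛ R h).right j))) g := by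
        simp [conv_apply_repr _ _ _ (ℛ R g), act_tmul]
    _ = Br.circ.mul g (∑ j ∈ (ℛ R h).index,
          Br.dot.mul ((ℛ R h).left j) (Br.actAt z ((ℛ R h).right j))) := by
        simp [← mulRight_dot_mul]
    _ = _ := by simp [← circ_mul_eq_sum, Br.circ.mul_assoc]

lemma lift_circ_mul_eq : lift Br.circ.mul = lift Br.dot.mul ∘ₗ Br.act.lTensor H ∘ₗ
    (TensorProduct.assoc R H H H).toLinearMap ∘ₗ comul.rTensor H := by
  refine TensorProduct.ext' fun g z => ?_
  simp [circ_mul_eq_sum _ g z (ℛ R g), ← (ℛ R g).eq, sum_tmul, act_tmul]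

lemma conv_circ_eq_conv_dot {C : Type*} [AddCommMonoid C] [Module R C] [Coalgebra R C]
    (f : C →ₗc[R] H) (g : C →ₗ[R] H) :
    conv Br.circ.mul f g = conv Br.dot.mul f (Br.act ∘ₗ map (f : C →ₗ[R] H) g ∘ₗ comul) := by
  rw [conv, lift_circ_mul_eq]
  simp only [conv, LinearMap.comp_assoc, ← CoalgHomClass.map_comp_comul f, coassoc_simps]

variable [IsCocomm R H]

noncomputable def actCoalgHom : H ⊗[R] H →ₗc[R] H :=
  Br.dot.convCoalgHom (Br.dot.SCoalgHom.comp (counitRight R H)) Br.circ.mulCoalgHom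

@[simp] lemma coe_actCoalgHom : (Br.actCoalgHom : H ⊗[R] H →ₗ[R] H) = Br.act := rfl

noncomputable def ractCoalgHom : H ⊗[R] H →ₗc[R] H :=
  Br.circ.convCoalgHom (Br.circ.SCoalgHom.comp Br.actCoalgHom) Br.circ.mulCoalgHom

@[simp] lemma coe_ractCoalgHom : (Br.ractCoalgHom : H ⊗[R] H →ₗ[R] H) = Br.ract := rfl

/-- `a∘x = (a₁ ⇀ x₁)∘(a₂ ↼ x₂)`. -/
lemma conv_act_ract : conv Br.circ.mul Br.act Br.ract = lift Br.circ.mul := by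
  have h := conv_comp_coalgHom Br.circ.mul LinearMap.id Br.circ.S Br.actCoalgHom
  rw [Br.circ.id_conv_S, convUnit_comp_coalgHom, LinearMap.id_comp, coe_actCoalgHom] at h
  rw [ract, ← conv_assoc _ Br.circ.mul_assoc, ← h, convUnit_conv _ Br.circ.one_mul]

/-- The matched-pair identity `(a₁ ⇀ x₁)∘((a₂ ↼ x₂) ⇀ y) = a ⇀ (x∘y)`. -/
lemma conv_act_actAt_comp_ract (y : H) :
    conv Br.circ.mul Br.act (Br.actAt y ∘ₗ Br.ract) = Br.act ∘ₗ (Br.mulRight y).lTensor H := by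
  have h : Br.act ∘ₗ map Br.act (Br.actAt y ∘ₗ Br.ract) ∘ₗ comul =
      Br.actAt y ∘ₗ lift Br.circ.mul := by
    rw [← conv_act_ract, conv, ← LinearMap.comp_assoc, ← LinearMap.comp_assoc, actAt_comp_mul]
    simp only [LinearMap.comp_assoc, coassoc_simps]
  rw [← coe_actCoalgHom, conv_circ_eq_conv_dot, coe_actCoalgHom, h, actAt_comp_mul]
  refine TensorProduct.ext' fun a x => ?_
  rw [conv_apply_tmul_repr _ _ _ (ℛ R a) (ℛ R x), Finset.sum_comm]
  calc _ = ∑ j ∈ (ℛ R x).index, conv Br.dot.mul (Br.actAt ((ℛ R x).left j))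
        (Br.actAt (Br.actAt y ((ℛ R x).right j))) a := by
        simp [conv_apply_repr _ _ _ (ℛ R a), act_tmul]
    _ = Br.act (a ⊗ₜ ∑ j ∈ (ℛ R x).index,
          Br.dot.mul ((ℛ R x).left j) (Br.actAt y ((ℛ R x).right j))) := by
        simp [← actAt_dot_mul, tmul_sum, act_tmul]
    _ = _ := by simp [← circ_mul_eq_sum]

lemma conv_comp_ract (p q : H) :
    conv Br.circ.mul (Br.circ.S ∘ₗ Br.actAt p ∘ₗ Br.ract) (Br.mulRight q ∘ₗ Br.ract) =
      conv Br.circ.mul (Br.circ.S ∘ₗ Br.act ∘ₗ (Br.mulRight p).lTensor H)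
        (Br.mulRight q ∘ₗ lift Br.circ.mul) := by
  have h : Br.mulRight q ∘ₗ Br.ract =
      conv Br.circ.mul (Br.circ.S ∘ₗ Br.act) (Br.mulRight q ∘ₗ lift Br.circ.mul) := by
    rw [ract, mulRight_comp_conv]
  rw [h, ← conv_assoc _ Br.circ.mul_assoc, Br.circ.conv_S_comp_S_comp, conv_act_actAt_comp_ract]

lemma ract_ract (a x y : H) :
    Br.ract (Br.ract (a ⊗ₜ x) ⊗ₜ y) = Br.ract (a ⊗ₜ Br.circ.mul x y) := by
  rw [ract_tmul_eq_sum _ _ _ (ℛ R y), ract_tmul_circ_mul]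
  refine Finset.sum_congr rfl fun j _ => ?_
  rw [← conv_comp_ract, ← LinearMap.comp_assoc, ← coe_ractCoalgHom, ← conv_comp_coalgHom]
  rfl

lemma comul_ract_tmul (a x : H) {ι κ : Type*} (ra : Repr R a ι) (rx : Repr R x κ) :
    comul (R := R) (Br.ract (a ⊗ₜ x)) = ∑ i ∈ ra.index, ∑ j ∈ rx.index,
      Br.ract (ra.left i ⊗ₜ rx.left j) ⊗ₜ[R] Br.ract (ra.right i ⊗ₜ rx.right j) := by
  rw [← coe_ractCoalgHom, CoalgHom.coe_toLinearMap, ← CoalgHomClass.map_comp_comul_apply,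
    comul_tmul_repr ra rx]
  simp only [map_sum, map_tmul]
  rfl

end HopfBrace

/-- In a cocommutative Hopf brace, `a↼x := T(a₍₁₎⇀x₍₁₎)∘a₍₂₎∘x₍₂₎` is a right action of
`(H,∘)` on `H` which is a coalgebra map. -/
theorem hopfBrace_right_action (Br : HopfBrace R H) (hc : Cocomm R H)
    (act ract : H → H → H)
    (hact : ∀ (g h : H) {ι : Type*} (r : Coalgebra.Repr R g ι),
      act g h = ∑ i ∈ r.index,
        Br.dot.mul (Br.dot.S (r.left i)) (Br.circ.mul (r.right i) h))
    (hract : ∀ (a x : H) {ι κ : Type*} (ra : Coalgebra.Repr R a ι) (rx : Coalgebra.Repr R x κ),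
      ract a x = ∑ i ∈ ra.index, ∑ j ∈ rx.index,
        Br.circ.mul (Br.circ.mul (Br.circ.S (act (ra.left i) (rx.left j)))
          (ra.right i)) (rx.right j)) :
    (∀ a x y : H, ract (ract a x) y = ract a (Br.circ.mul x y)) ∧
    (∀ a : H, ract a Br.circ.one = a) ∧
    (∀ (a x : H) {ι κ : Type*} (ra : Coalgebra.Repr R a ι) (rx : Coalgebra.Repr R x κ),
      comul (R := R) (ract a x) = ∑ i ∈ ra.index, ∑ j ∈ rx.index,
        ract (ra.left i) (rx.left j) ⊗ₜ[R] ract (ra.right i) (rx.right j)) := by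
  have : IsCocomm R H := ⟨LinearMap.ext hc⟩
  have act_eq (g z : H) : act g z = Br.act (g ⊗ₜ z) := by
    let r := (ℛ R g).uLift
    exact (hact g z r).trans (Br.act_tmul_repr g z r).symm
  have ract_eq (a x : H) : ract a x = Br.ract (a ⊗ₜ x) := by
    let ra := (ℛ R a).uLift
    let rx := (ℛ R x).uLift
    rw [hract a x ra rx, Br.ract_tmul_repr a x ra rx]
    simp only [act_eq]
  refine ⟨fun a x y => ?_, fun a => ?_, fun a x _ _ ra rx => ?_⟩
  · rw [ract_eq, ract_eq, ract_eq, Br.ract_ract]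
  · rw [ract_eq, Br.ract_tmul_one]
  · simp only [ract_eq, Br.comul_ract_tmul a x ra rx]
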